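/- Assume P is eventually positive, has SRLP with ratio-limit kernel H, and has Gerl's ratio limit property with spectral radius ρ > 0. Fix z ∈ G, n ∈ ℕ, and x, y ∈ G with μ^{*n}(x⁻¹y) > 0, and let ℓ²(I_z) be the real Hilbert space over I_z = {(m, w) : m ∈ ℕ, w ∈ G, μ^{*m}(w⁻¹z) > 0} with orthonormal basis e^{(m)}_{w,z}. Then every bounded linear operator D on ℓ²(I_z) satisfying, for all (m, w) ∈ I_z: D e^{(m)}_{w,z} = 0 if w ≠ y, and D e^{(m)}_{y,z} = (√(ρ^n·μ^{*m}(y⁻¹z)/μ^{*(n+m)}(x⁻¹z)) − √(H(x⁻¹y, x⁻¹z)))·e^{(n+m)}_{x,z} (the target index (n+m, x) lies in I_z since μ^{*(n+m)}(x⁻¹z) ≥ μ^{*n}(x⁻¹y)·μ^{*m}(y⁻¹z) > 0), is a compact operator. -/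

import Mathlib

/-!
On the basis vectors, `D` acts as a weighted partial shift `e_{(m,y)} ↦ c_m e_{(n+m,x)}`
(and kills all other basis vectors). Gerl's property gives `ν (n+m) / ν m → ρ^n`, which
together with the ratio limit `ν m (y⁻¹z) / ν m (x⁻¹z) → H(x⁻¹y, x⁻¹z)` shows `c_m → 0`.
A weighted shift along an injective map with weights tending to zero is a norm limit of its
finite-rank truncations, hence compact.
-/

open Filter Topology
open scoped Classical

noncomputable section

/-- The index set of the Fock fiber over z: pairs (m, w) with μ^{*m}(w⁻¹z) > 0. -/
def FockIndexAt {G : Type*} [Group G] (ν : ℕ → G → ℝ) (z : G) : Type _ :=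
  {p : ℕ × G // 0 < ν p.1 (p.2⁻¹ * z)}

/-- The Fock fiber ℓ²(I_z) over z. -/
abbrev FockSpaceAt {G : Type*} [Group G] (ν : ℕ → G → ℝ) (z : G) : Type _ :=
  lp (fun _ : FockIndexAt ν z => ℝ) 2

/-- The orthonormal basis vector e^{(m)}_{w,z} of the Fock fiber over z. -/
def fockVecAt {G : Type*} [Group G] (ν : ℕ → G → ℝ) (z : G) (i : FockIndexAt ν z) :
    FockSpaceAt ν z :=
  lp.single 2 i 1

namespace lp

variable {ι 𝕜 : Type*} [RCLike 𝕜]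

theorem norm_sum_single_comp_sq {s : Finset ι} {σ : ι → ι} (hσ : Set.InjOn σ s)
    (c : ι → 𝕜) :
    ‖∑ i ∈ s, lp.single (E := fun _ : ι => 𝕜) 2 (σ i) (c i)‖ ^ 2 = ∑ i ∈ s, ‖c i‖ ^ 2 := by
  rcases s.eq_empty_or_nonempty with rfl | ⟨i₀, -⟩
  · simp
  have : Nonempty ι := ⟨i₀⟩
  have key := lp.norm_sum_single (E := fun _ : ι => 𝕜) (p := 2) (by norm_num)
    (fun j => c (Function.invFunOn σ s j)) (s.image σ)
  simp only [ENNReal.toReal_ofNat, Real.rpow_two] at key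
  rw [Finset.sum_image hσ, Finset.sum_image hσ] at key
  have hinv : ∀ i ∈ s, c (Function.invFunOn σ s (σ i)) = c i := fun i hi => by
    rw [hσ.leftInvOn_invFunOn hi]
  rwa [Finset.sum_congr rfl fun i hi => congrArg (‖·‖ ^ 2) (hinv i hi),
    Finset.sum_congr rfl fun i hi => congrArg (lp.single 2 (σ i)) (hinv i hi)] at key

theorem sum_norm_sq_le_norm_sq (g : ℓ²(ι, 𝕜)) (s : Finset ι) :
    ∑ i ∈ s, ‖g i‖ ^ 2 ≤ ‖g‖ ^ 2 := by
  simpa only [ENNReal.toReal_ofNat, Real.rpow_two] using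
    lp.sum_rpow_le_norm_rpow (by norm_num) g s

theorem opNorm_le_of_apply_single (T : ℓ²(ι, 𝕜) →L[𝕜] ℓ²(ι, 𝕜)) {σ : ι → ι} {d : ι → 𝕜}
    (hσ : Set.InjOn σ {i | d i ≠ 0})
    (hT : ∀ i, T (lp.single 2 i 1) = d i • lp.single 2 (σ i) 1) {C : ℝ} (hC : 0 ≤ C)
    (hd : ∀ i, ‖d i‖ ≤ C) : ‖T‖ ≤ C := by
  refine T.opNorm_le_bound hC fun g => ?_
  have hterm : ∀ i, T (lp.single 2 i (g i)) = lp.single 2 (σ i) (g i * d i) := fun i => by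
    have hg : lp.single 2 i (g i) = g i • lp.single (E := fun _ : ι => 𝕜) 2 i 1 := by
      rw [← lp.single_smul, smul_eq_mul, mul_one]
    rw [hg, map_smul, hT, smul_smul, ← lp.single_smul, smul_eq_mul, mul_one]
  have hsum : HasSum (fun i => lp.single 2 (σ i) (g i * d i)) (T g) := by
    simpa only [hterm] using (lp.hasSum_single ENNReal.ofNat_ne_top g).mapL T
  refine le_of_tendsto' hsum.norm fun A => ?_
  have hA : ∑ i ∈ A, lp.single 2 (σ i) (g i * d i)
      = ∑ i ∈ A with d i ≠ 0, lp.single (E := fun _ : ι => 𝕜) 2 (σ i) (g i * d i) :=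
    (Finset.sum_filter_of_ne (p := fun i => d i ≠ 0) fun _ _ h hdi => h (by simp [hdi])).symm
  have hsq : ‖∑ i ∈ A, lp.single (E := fun _ : ι => 𝕜) 2 (σ i) (g i * d i)‖ ^ 2
      ≤ (C * ‖g‖) ^ 2 := calc
    _ = ∑ i ∈ A with d i ≠ 0, ‖g i * d i‖ ^ 2 := by
      rw [hA, norm_sum_single_comp_sq (s := {i ∈ A | d i ≠ 0})
        (hσ.mono fun i hi => (Finset.mem_filter.mp hi).2)]
    _ ≤ ∑ i ∈ A with d i ≠ 0, C ^ 2 * ‖g i‖ ^ 2 := by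
      refine Finset.sum_le_sum fun i _ => ?_
      rw [norm_mul, mul_pow, mul_comm]
      gcongr
      exact hd i
    _ ≤ ∑ i ∈ A, C ^ 2 * ‖g i‖ ^ 2 :=
      Finset.sum_le_sum_of_subset_of_nonneg (Finset.filter_subset _ _) fun i _ _ => by positivity
    _ ≤ (C * ‖g‖) ^ 2 := by
      rw [← Finset.mul_sum, mul_pow]
      gcongr
      exact sum_norm_sq_le_norm_sq g A
  exact (sq_le_sq₀ (norm_nonneg _) (by positivity)).mp hsq

variable (𝕜) in
def coordProj (F : Finset ι) : ℓ²(ι, 𝕜) →L[𝕜] ℓ²(ι, 𝕜) :=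
  ∑ i ∈ F, (lp.singleContinuousLinearMap 𝕜 _ 2 i).comp (lp.evalCLM 𝕜 _ 2 i)

theorem coordProj_single (F : Finset ι) (j : ι) (a : 𝕜) :
    coordProj 𝕜 F (lp.single 2 j a) = if j ∈ F then lp.single 2 j a else 0 := by
  simp [coordProj, lp.evalCLM, lp.single_apply, Pi.single_apply, apply_ite (lp.single 2 _)]

theorem isCompactOperator_coordProj (F : Finset ι) : IsCompactOperator (coordProj 𝕜 F) := by
  refine Submodule.sum_mem (compactOperator (RingHom.id 𝕜) _ _) fun i _ => ?_
  exact (isCompactOperator_of_locallyCompactSpace_dom (lp.evalCLM 𝕜 (fun _ : ι => 𝕜) 2 i)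
    ).clm_comp (lp.singleContinuousLinearMap 𝕜 (fun _ : ι => 𝕜) 2 i)

theorem isCompactOperator_of_apply_single (T : ℓ²(ι, 𝕜) →L[𝕜] ℓ²(ι, 𝕜))
    {σ : ι → ι} {d : ι → 𝕜} (hσ : Set.InjOn σ {i | d i ≠ 0}) (hd : Tendsto d cofinite (𝓝 0))
    (hT : ∀ᶠ i in cofinite, T (lp.single 2 i 1) = d i • lp.single 2 (σ i) 1) :
    IsCompactOperator T := by
  suffices T ∈ closure {S : ℓ²(ι, 𝕜) →L[𝕜] ℓ²(ι, 𝕜) | IsCompactOperator S} by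
    rwa [isClosed_setOfPred_isCompactOperator.closure_eq] at this
  refine Metric.mem_closure_iff.mpr fun ε hε => ?_
  have hF : {i | ¬(T (lp.single 2 i 1) = d i • lp.single 2 (σ i) 1 ∧ ‖d i‖ < ε / 2)}.Finite :=
    hT.and <| hd.eventually (Metric.ball_mem_nhds 0 (half_pos hε)) |>.mono
      fun _ => mem_ball_zero_iff.mp
  set F := hF.toFinset
  refine ⟨T ∘L coordProj 𝕜 F, (isCompactOperator_coordProj F).clm_comp T, ?_⟩
  have hgood : ∀ i ∉ F, T (lp.single 2 i 1) = d i • lp.single 2 (σ i) 1 ∧ ‖d i‖ < ε / 2 :=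
    fun i hi => by simpa [F] using hi
  rw [dist_eq_norm]
  -- `T - T ∘ coordProj F` is again a weighted shift, now with all weights below `ε / 2`.
  refine (opNorm_le_of_apply_single _ (d := fun i => if i ∈ F then 0 else d i)
    (hσ.mono fun i hi => ?_) (fun i => ?_) (half_pos hε).le fun i => ?_).trans_lt
    (half_lt_self hε)
  · exact fun h => hi (by simp [h])
  · by_cases h : i ∈ F
    · simp [coordProj_single, h]
    · simp [coordProj_single, h, (hgood i h).1]
  · by_cases h : i ∈ F
    · simp [h, (half_pos hε).le]
    · simpa [h] using (hgood i h).2.le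

end lp

theorem tendsto_div_add_of_tendsto_succ_div {b : ℕ → ℝ} {ρ : ℝ} (hb : ∀ᶠ m in atTop, b m ≠ 0)
    (h : Tendsto (fun m => b (m + 1) / b m) atTop (𝓝 ρ)) (k : ℕ) :
    Tendsto (fun m => b (k + m) / b m) atTop (𝓝 (ρ ^ k)) := by
  induction k with
  | zero =>
    refine tendsto_const_nhds.congr' (hb.mono fun m hm => ?_)
    simp [hm]
  | succ k ih =>
    have hshift : Tendsto (k + ·) atTop atTop := by
      simpa only [add_comm k] using tendsto_add_atTop_nat k
    rw [pow_succ']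
    refine ((h.comp hshift).mul ih).congr' ?_
    filter_upwards [hshift.eventually hb] with m hm
    rw [Function.comp_apply, div_mul_div_cancel₀ hm, add_right_comm]

theorem tendsto_pow_mul_div_add {a b : ℕ → ℝ} {ρ L : ℝ} (hρ : ρ ≠ 0)
    (hb : ∀ᶠ m in atTop, b m ≠ 0) (h : Tendsto (fun m => b (m + 1) / b m) atTop (𝓝 ρ))
    (hab : Tendsto (fun m => a m / b m) atTop (𝓝 L)) (k : ℕ) :
    Tendsto (fun m => ρ ^ k * a m / b (k + m)) atTop (𝓝 L) := by
  have hk := (tendsto_const_nhds (x := ρ ^ k)).div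
    (tendsto_div_add_of_tendsto_succ_div hb h k) (pow_ne_zero k hρ)
  rw [div_self (pow_ne_zero k hρ)] at hk
  refine (mul_one L ▸ hab.mul hk).congr' ?_
  filter_upwards [hb] with m hm
  rw [Pi.div_apply, div_div_eq_mul_div]
  field_simp

namespace FockIndexAt

variable {G : Type*} [Group G] {ν : ℕ → G → ℝ} {z : G}

theorem finite_setOf_snd_eq_fst_lt (y : G) (N : ℕ) :
    {i : FockIndexAt ν z | i.1.2 = y ∧ i.1.1 < N}.Finite :=
  ((Set.finite_Iio N).prod (Set.finite_singleton y)).preimage Subtype.val_injective.injOn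
    |>.subset fun _ hi => ⟨hi.2, hi.1⟩

-- The fallback `i` is never seen: the weights used with `shift` vanish there.
def shift (n : ℕ) (x : G) (i : FockIndexAt ν z) : FockIndexAt ν z :=
  if h : 0 < ν (n + i.1.1) (x⁻¹ * z) then ⟨(n + i.1.1, x), h⟩ else i

theorem shift_of_pos {n : ℕ} {x : G} {i : FockIndexAt ν z} (h : 0 < ν (n + i.1.1) (x⁻¹ * z)) :
    shift n x i = ⟨(n + i.1.1, x), h⟩ :=
  dif_pos h

end FockIndexAt

open FockIndexAt in
theorem isCompactOperator_of_fockVecAt {G : Type*} [Group G] {ν : ℕ → G → ℝ} {z : G}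
    (n : ℕ) (x y : G) {c : ℕ → ℝ} (hc : Tendsto c atTop (𝓝 0))
    (hpos : ∀ᶠ m in atTop, 0 < ν m (x⁻¹ * z)) (D : FockSpaceAt ν z →L[ℝ] FockSpaceAt ν z)
    (hD0 : ∀ (m : ℕ) (w : G) (h : 0 < ν m (w⁻¹ * z)),
      w ≠ y → D (fockVecAt ν z ⟨(m, w), h⟩) = 0)
    (hDy : ∀ (m : ℕ) (h : 0 < ν m (y⁻¹ * z)) (h' : 0 < ν (n + m) (x⁻¹ * z)),
      D (fockVecAt ν z ⟨(m, y), h⟩) = c m • fockVecAt ν z ⟨(n + m, x), h'⟩) :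
    IsCompactOperator D := by
  obtain ⟨m₁, hm₁⟩ := eventually_atTop.mp hpos
  set d : FockIndexAt ν z → ℝ := fun i =>
    if i.1.2 = y ∧ 0 < ν (n + i.1.1) (x⁻¹ * z) then c i.1.1 else 0
  have hsupp : ∀ i, d i ≠ 0 → i.1.2 = y ∧ 0 < ν (n + i.1.1) (x⁻¹ * z) := fun i hi => by
    by_contra h
    exact hi (if_neg h)
  refine lp.isCompactOperator_of_apply_single D (σ := shift n x) (d := d) ?_ ?_ ?_
  · intro i hi j hj hij
    obtain ⟨hiy, hipos⟩ := hsupp i hi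
    obtain ⟨hjy, hjpos⟩ := hsupp j hj
    rw [shift_of_pos hipos, shift_of_pos hjpos] at hij
    have hfst : n + i.1.1 = n + j.1.1 := congrArg (fun k : FockIndexAt ν z => k.1.1) hij
    exact Subtype.ext (Prod.ext (by omega) (hiy.trans hjy.symm))
  · refine Metric.tendsto_nhds.mpr fun ε hε => ?_
    obtain ⟨N, hN⟩ := eventually_atTop.mp (Metric.tendsto_nhds.mp hc ε hε)
    refine eventually_cofinite.mpr ((finite_setOf_snd_eq_fst_lt y N).subset fun i hi => ?_)
    have hdi : d i ≠ 0 := fun h => hi (by simpa [h] using hε)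
    obtain ⟨hiy, hipos⟩ := hsupp i hdi
    refine ⟨hiy, not_le.mp fun hle => hi ?_⟩
    simpa [d, hiy, hipos] using hN _ hle
  · refine eventually_cofinite.mpr ((finite_setOf_snd_eq_fst_lt y m₁).subset fun i hi => ?_)
    by_contra hex
    apply hi
    by_cases hw : i.1.2 = y
    · have hpos' : 0 < ν (n + i.1.1) (x⁻¹ * z) := hm₁ _ (by
        have := not_lt.mp fun h => hex ⟨hw, h⟩
        omega)
      rw [show d i = c i.1.1 from if_pos ⟨hw, hpos'⟩, shift_of_pos hpos']
      obtain ⟨⟨m, w⟩, hmw⟩ := i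
      subst hw
      exact hDy m hmw hpos'
    · rw [show d i = 0 from if_neg fun h => hw h.1, zero_smul]
      exact hD0 i.1.1 i.1.2 i.2 hw

theorem stmt15_general {G : Type*} [Group G]
    (ν : ℕ → G → ℝ)
(hev : ∀ y : G, ∃ m₀ : ℕ, ∀ m ≥ m₀, 0 < ν m y)
(H : G → G → ℝ)
    (hH : ∀ x y : G, Tendsto (fun m : ℕ => ν m (x⁻¹ * y) / ν m y) atTop (𝓝 (H x y)))
(ρ : ℝ) (hρ : 0 < ρ)
    (hGerl : ∀ w : G, Tendsto (fun m : ℕ => ν (m + 1) w / ν m w) atTop (𝓝 ρ))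
    (z : G) (n : ℕ) (x y : G)
    (D : FockSpaceAt ν z →L[ℝ] FockSpaceAt ν z)
    (hD0 : ∀ (m : ℕ) (w : G) (h : 0 < ν m (w⁻¹ * z)),
      w ≠ y → D (fockVecAt ν z ⟨(m, w), h⟩) = 0)
    (hDy : ∀ (m : ℕ) (h : 0 < ν m (y⁻¹ * z)) (h' : 0 < ν (n + m) (x⁻¹ * z)),
      D (fockVecAt ν z ⟨(m, y), h⟩) =
        (Real.sqrt (ρ ^ n * ν m (y⁻¹ * z) / ν (n + m) (x⁻¹ * z)) -
            Real.sqrt (H (x⁻¹ * y) (x⁻¹ * z))) • fockVecAt ν z ⟨(n + m, x), h'⟩) :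
    IsCompactOperator (⇑D) := by
  have hpos : ∀ᶠ m in atTop, 0 < ν m (x⁻¹ * z) := eventually_atTop.mpr (hev (x⁻¹ * z))
  have hratio : Tendsto (fun m => ν m (y⁻¹ * z) / ν m (x⁻¹ * z)) atTop
      (𝓝 (H (x⁻¹ * y) (x⁻¹ * z))) := by
    simpa [mul_assoc] using hH (x⁻¹ * y) (x⁻¹ * z)
  have hcoef := tendsto_pow_mul_div_add hρ.ne' (hpos.mono fun _ h => h.ne') (hGerl _) hratio n
  have hc := ((Real.continuous_sqrt.tendsto _).comp hcoef).sub_const √(H (x⁻¹ * y) (x⁻¹ * z))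
  rw [sub_self] at hc
  exact isCompactOperator_of_fockVecAt n x y hc hpos D hD0 hDy

/-- on the fiber ℓ²(I_z), the difference between the restricted operators
T^{(n)}_{x,y} and W^{(n)}_{x,y} is a compact operator. -/
theorem stmt15 {G : Type*} [Group G] [Countable G]
(μ : G → ℝ) (hμnn : ∀ g : G, 0 ≤ μ g)
    (hμfin : (Function.support μ).Finite)
    (hμgen : Subsemigroup.closure (Function.support μ) = ⊤)
    (hμsum : ∑ᶠ g : G, μ g = 1)
    (ν : ℕ → G → ℝ)
    (hν0 : ∀ x : G, ν 0 x = if x = 1 then 1 else 0)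
    (hνs : ∀ (m : ℕ) (x : G), ν (m + 1) x = ∑ᶠ g : G, ν m g * μ (g⁻¹ * x))
(hev : ∀ y : G, ∃ m₀ : ℕ, ∀ m ≥ m₀, 0 < ν m y)
(H : G → G → ℝ)
    (hH : ∀ x y : G, Tendsto (fun m : ℕ => ν m (x⁻¹ * y) / ν m y) atTop (𝓝 (H x y)))
    (hHpos : ∀ x y : G, 0 < H x y)
(ρ : ℝ) (hρ : 0 < ρ)
    (hGerl : ∀ w : G, Tendsto (fun m : ℕ => ν (m + 1) w / ν m w) atTop (𝓝 ρ))
    (z : G) (n : ℕ) (x y : G) (hxy : 0 < ν n (x⁻¹ * y))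
    (D : FockSpaceAt ν z →L[ℝ] FockSpaceAt ν z)
    (hD0 : ∀ (m : ℕ) (w : G) (h : 0 < ν m (w⁻¹ * z)),
      w ≠ y → D (fockVecAt ν z ⟨(m, w), h⟩) = 0)
    (hDy : ∀ (m : ℕ) (h : 0 < ν m (y⁻¹ * z)) (h' : 0 < ν (n + m) (x⁻¹ * z)),
      D (fockVecAt ν z ⟨(m, y), h⟩) =
        (Real.sqrt (ρ ^ n * ν m (y⁻¹ * z) / ν (n + m) (x⁻¹ * z)) -
            Real.sqrt (H (x⁻¹ * y) (x⁻¹ * z))) • fockVecAt ν z ⟨(n + m, x), h'⟩) :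
    IsCompactOperator (⇑D) :=
  stmt15_general ν hev H hH ρ hρ hGerl z n x y D hD0 hDy
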